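/- Let (Ω, 𝓕, μ) be a standard Borel probability space. Let A : Ω → ℝ take values in {0,1}, let Y₁, Y₀ be bounded real-valued random variables, set Y = A·Y₁ + (1 − A)·Y₀, let X : Ω → ℝ^d be measurable, and suppose the pair (Y₁, Y₀) is conditionally independent of A given σ(X). Let g : ℝ^d → ℝ be measurable with c ≤ g(x) ≤ 1 − c for all x, for some 0 < c < 1/2, such that g ∘ X is a version of E[A | σ(X)]. Then E[(A/g(X) − (1 − A)/(1 − g(X)))·Y] = E[Y₁ − Y₀]. (Inverse-probability-weighting identification of the average treatment effect contrast.) -/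

import Mathlib

/-!
Conditional independence of `σ(Y₁, Y₀)` and `σ(A)` given `σ(X)` upgrades the propensity `g ∘ X`,
a version of `E[A | X]`, to a version of `E[A | X, Y₁, Y₀]`; this is checked on the π-system of
sets `u ∩ r` with `u ∈ σ(X)`, `r ∈ σ(Y₁, Y₀)`. As `Y₁ / g(X)` is measurable for `σ(X, Y₁, Y₀)`,
`E[A Y₁ / g(X)] = E[E[A | X, Y₁, Y₀] Y₁ / g(X)] = E[Y₁]`, and likewise with `1 - A`, `1 - g(X)`
and `Y₀`. Since `A ∈ {0, 1}`, `A Y = A Y₁` and `(1 - A) Y = (1 - A) Y₀`.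
-/

open MeasureTheory ProbabilityTheory

theorem IsPiSystem.image2_inter {Ω : Type*} {C D : Set (Set Ω)} (hC : IsPiSystem C)
    (hD : IsPiSystem D) : IsPiSystem (Set.image2 (· ∩ ·) C D) := by
  rintro _ ⟨c₁, hc₁, d₁, hd₁, rfl⟩ _ ⟨c₂, hc₂, d₂, hd₂, rfl⟩ hne
  rw [Set.inter_inter_inter_comm] at hne ⊢
  exact ⟨_, hC c₁ hc₁ c₂ hc₂ hne.left, _, hD d₁ hd₁ d₂ hd₂ hne.right, rfl⟩

theorem MeasurableSpace.generateFrom_image2_inter_measurableSet {Ω : Type*}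
    (m₁ m₂ : MeasurableSpace Ω) :
    generateFrom (Set.image2 (· ∩ ·) {s | MeasurableSet[m₁] s} {t | MeasurableSet[m₂] t})
      = m₁ ⊔ m₂ := by
  refine le_antisymm (generateFrom_le ?_) (sup_le (fun s hs ↦ ?_) (fun t ht ↦ ?_))
  · rintro _ ⟨s, hs, t, ht, rfl⟩
    exact (le_sup_left (b := m₂) s hs).inter (le_sup_right (a := m₁) t ht)
  · exact measurableSet_generateFrom ⟨s, hs, Set.univ, MeasurableSet.univ, Set.inter_univ s⟩
  · exact measurableSet_generateFrom ⟨Set.univ, MeasurableSet.univ, t, ht, Set.univ_inter t⟩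

namespace MeasureTheory

variable {Ω E : Type*} [NormedAddCommGroup E] [NormedSpace ℝ E] {m mΩ : MeasurableSpace Ω}
  {μ : Measure Ω}

theorem setIntegral_eq_of_isPiSystem (hm : m ≤ mΩ) {C : Set (Set Ω)}
    (h_gen : m = MeasurableSpace.generateFrom C) (hC : IsPiSystem C) {f g : Ω → E}
    (hf : Integrable f μ) (hg : Integrable g μ) (h_univ : ∫ x, f x ∂μ = ∫ x, g x ∂μ)
    (h_basic : ∀ t ∈ C, ∫ x in t, f x ∂μ = ∫ x in t, g x ∂μ) {t : Set Ω}
    (ht : MeasurableSet[m] t) : ∫ x in t, f x ∂μ = ∫ x in t, g x ∂μ := by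
  induction t, ht using MeasurableSpace.induction_on_inter h_gen hC with
  | empty => simp
  | basic t ht => exact h_basic t ht
  | compl t ht ih =>
    rw [← add_right_inj (∫ x in t, f x ∂μ), integral_add_compl (hm t ht) hf, ih,
      integral_add_compl (hm t ht) hg, h_univ]
  | iUnion s hdisj hs ih =>
    rw [integral_iUnion (fun i ↦ hm _ (hs i)) hdisj hf.integrableOn,
      integral_iUnion (fun i ↦ hm _ (hs i)) hdisj hg.integrableOn]
    exact tsum_congr ih

theorem setIntegral_inter_eq_setIntegral_condExp_indicator [CompleteSpace E] (hm : m ≤ mΩ)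
    [SigmaFinite (μ.trim hm)] {f : Ω → E} (hf : Integrable f μ) {s t : Set Ω}
    (hs : MeasurableSet[m] s) (ht : MeasurableSet t) :
    ∫ x in s ∩ t, f x ∂μ = ∫ x in s, μ[t.indicator f | m] x ∂μ := by
  rw [setIntegral_condExp hm (hf.indicator ht) hs, setIntegral_indicator ht]

theorem condExp_const_sub [CompleteSpace E] [IsFiniteMeasure μ] (hm : m ≤ mΩ) (a : E)
    {f : Ω → E} (hf : Integrable f μ) :
    μ[fun ω ↦ a - f ω | m] =ᵐ[μ] fun ω ↦ a - μ[f | m] ω := by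
  have h_sub := condExp_sub (integrable_const a) hf m
  rwa [condExp_const hm] at h_sub

theorem Integrable.div_mul_of_eq_zero_or_eq_one {b h w : Ω → ℝ} (hw : Integrable w μ)
    (hb : AEStronglyMeasurable b μ) (hb01 : ∀ ω, b ω = 0 ∨ b ω = 1)
    (hh : AEStronglyMeasurable h μ) {c : ℝ} (hc : 0 < c) (hhc : ∀ ω, c ≤ h ω) :
    Integrable (fun ω ↦ b ω / h ω * w ω) μ := by
  refine hw.bdd_mul (c := c⁻¹) (hb.div₀ hh) (ae_of_all _ fun ω ↦ ?_)
  rw [Real.norm_eq_abs, abs_div, abs_of_pos (hc.trans_le (hhc ω)), ← one_div]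
  refine div_le_div₀ zero_le_one ?_ hc (hhc ω)
  rcases hb01 ω with h | h <;> simp [h]

theorem integral_div_mul_eq_of_ae_eq_condExp (hm : m ≤ mΩ) [SigmaFinite (μ.trim hm)]
    {b h w : Ω → ℝ} (hh : StronglyMeasurable[m] h) (hw : StronglyMeasurable[m] w)
    (h_ne : ∀ᵐ ω ∂μ, h ω ≠ 0) (hver : h =ᵐ[μ] μ[b | m]) (hb : Integrable b μ)
    (hbw : Integrable (fun ω ↦ b ω / h ω * w ω) μ) :
    ∫ ω, b ω / h ω * w ω ∂μ = ∫ ω, w ω ∂μ := by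
  have h_eq : (fun ω ↦ b ω / h ω * w ω) = (w / h) * b := by
    ext ω; simp only [Pi.mul_apply, Pi.div_apply]; ring
  rw [h_eq] at hbw ⊢
  rw [← integral_condExp hm]
  refine integral_congr_ae ?_
  filter_upwards [condExp_mul_of_stronglyMeasurable_left (hw.div hh) hbw hb, hver, h_ne]
    with ω h_pull h_ver h_ne
  rw [h_pull, Pi.mul_apply, ← h_ver, Pi.div_apply, div_mul_cancel₀ _ h_ne]

end MeasureTheory

namespace ProbabilityTheory

variable {Ω : Type*} {mΩ : MeasurableSpace Ω} [StandardBorelSpace Ω] {μ : Measure Ω}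
  [IsFiniteMeasure μ] {m' m₁ m₂ : MeasurableSpace Ω}

theorem CondIndep.condExp_indicator_indicator_ae_eq (hm' : m' ≤ mΩ) (hm₁ : m₁ ≤ mΩ)
    (hm₂ : m₂ ≤ mΩ) (hCI : CondIndep m' m₁ m₂ hm' μ) {r s : Set Ω} (hr : MeasurableSet[m₁] r)
    (hs : MeasurableSet[m₂] s) :
    μ[r.indicator (s.indicator fun _ ↦ 1) | m'] =ᵐ[μ] μ[r.indicator (μ⟦s | m'⟧) | m'] := by
  have h_ind : r.indicator (μ⟦s | m'⟧) = r.indicator (fun _ ↦ (1 : ℝ)) * μ⟦s | m'⟧ := by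
    ext x; by_cases hx : x ∈ r <;> simp [hx]
  rw [Set.indicator_indicator, h_ind]
  refine ((condIndep_iff m' m₁ m₂ hm' hm₁ hm₂ μ).1 hCI r s hr hs).trans ?_
  refine (condExp_mul_of_stronglyMeasurable_right stronglyMeasurable_condExp ?_
    ((integrable_const 1).indicator (hm₁ r hr))).symm
  exact h_ind ▸ integrable_condExp.indicator (hm₁ r hr)

theorem CondIndep.condExp_indicator_sup_ae_eq (hm' : m' ≤ mΩ) (hm₁ : m₁ ≤ mΩ) (hm₂ : m₂ ≤ mΩ)
    (hCI : CondIndep m' m₁ m₂ hm' μ) {s : Set Ω} (hs : MeasurableSet[m₂] s) :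
    μ⟦s | m' ⊔ m₁⟧ =ᵐ[μ] μ⟦s | m'⟧ := by
  have hsup : m' ⊔ m₁ ≤ mΩ := sup_le hm' hm₁
  have h_int : Integrable (s.indicator fun _ ↦ (1 : ℝ)) μ :=
    (integrable_const 1).indicator (hm₂ s hs)
  have h_basic : ∀ t ∈ Set.image2 (· ∩ ·) {u | MeasurableSet[m'] u} {r | MeasurableSet[m₁] r},
      ∫ x in t, s.indicator (fun _ ↦ (1 : ℝ)) x ∂μ = ∫ x in t, (μ⟦s | m'⟧) x ∂μ := by
    rintro _ ⟨u, hu, r, hr, rfl⟩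
    rw [setIntegral_inter_eq_setIntegral_condExp_indicator hm' h_int hu (hm₁ r hr),
      setIntegral_inter_eq_setIntegral_condExp_indicator hm' integrable_condExp hu (hm₁ r hr)]
    exact setIntegral_congr_ae (hm' u hu)
      ((hCI.condExp_indicator_indicator_ae_eq hm' hm₁ hm₂ hr hs).mono fun x hx _ ↦ hx)
  refine (ae_eq_condExp_of_forall_setIntegral_eq hsup h_int
    (fun _ _ _ ↦ integrable_condExp.integrableOn) (fun t ht _ ↦ ?_)
    (stronglyMeasurable_condExp.mono (le_sup_left : m' ≤ m' ⊔ m₁)).aestronglyMeasurable).symm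
  exact (setIntegral_eq_of_isPiSystem hsup
    (MeasurableSpace.generateFrom_image2_inter_measurableSet m' m₁).symm
    (.image2_inter (@MeasurableSpace.isPiSystem_measurableSet Ω m')
      (@MeasurableSpace.isPiSystem_measurableSet Ω m₁))
    h_int integrable_condExp (integral_condExp hm').symm h_basic ht).symm

theorem CondIndep.integral_div_mul_eq (hm' : m' ≤ mΩ) (hm₁ : m₁ ≤ mΩ) (hm₂ : m₂ ≤ mΩ)
    (hCI : CondIndep m' m₁ m₂ hm' μ) {b h w : Ω → ℝ} (hb : Measurable[m₂] b)
    (hb01 : ∀ ω, b ω = 0 ∨ b ω = 1) (hh : StronglyMeasurable[m'] h) (hver : h =ᵐ[μ] μ[b | m'])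
    {c : ℝ} (hc : 0 < c) (hhc : ∀ ω, c ≤ h ω) (hw : StronglyMeasurable[m₁] w)
    (hwi : Integrable w μ) :
    ∫ ω, b ω / h ω * w ω ∂μ = ∫ ω, w ω ∂μ := by
  have hb_ind : b = (b ⁻¹' {1}).indicator fun _ ↦ 1 := by
    ext ω; rcases hb01 ω with h | h <;> simp [h]
  have hb' : Measurable[mΩ] b := hb.mono hm₂ le_rfl
  have hbi : Integrable b μ := by
    rw [hb_ind]; exact (integrable_const 1).indicator (hb' (measurableSet_singleton 1))
  have hver_sup : h =ᵐ[μ] μ[b | m' ⊔ m₁] := by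
    rw [hb_ind] at hver ⊢
    exact hver.trans
      (hCI.condExp_indicator_sup_ae_eq hm' hm₁ hm₂ (hb (measurableSet_singleton 1))).symm
  exact integral_div_mul_eq_of_ae_eq_condExp (sup_le hm' hm₁) (hh.mono le_sup_left)
    (hw.mono le_sup_right) (ae_of_all _ fun ω ↦ (hc.trans_le (hhc ω)).ne') hver_sup hbi
    (hwi.div_mul_of_eq_zero_or_eq_one hb'.aestronglyMeasurable hb01
      (hh.mono hm').aestronglyMeasurable hc hhc)

end ProbabilityTheory

theorem ipw_ate_identification_general
    {Ω : Type*} [MeasurableSpace Ω] [StandardBorelSpace Ω]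
    (μ : Measure Ω) [IsProbabilityMeasure μ]
    {d : ℕ} (A Y Y₁ Y₀ : Ω → ℝ) (X : Ω → (Fin d → ℝ)) (g : (Fin d → ℝ) → ℝ) (c : ℝ)
    (hA : Measurable A) (hAval : ∀ ω, A ω = 0 ∨ A ω = 1)
    (hY₁ : Measurable Y₁) (hY₀ : Measurable Y₀)
    (hY₁b : ∃ M, ∀ ω, |Y₁ ω| ≤ M) (hY₀b : ∃ M, ∀ ω, |Y₀ ω| ≤ M)
    (hYdef : ∀ ω, Y ω = A ω * Y₁ ω + (1 - A ω) * Y₀ ω)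
    (hX : Measurable X) (hg : Measurable g)
    (hCI : CondIndep (MeasurableSpace.comap X inferInstance)
      (MeasurableSpace.comap (fun ω => (Y₁ ω, Y₀ ω)) inferInstance)
      (MeasurableSpace.comap A inferInstance)
      hX.comap_le μ)
    (hc : 0 < c) (hglb : ∀ x, c ≤ g x) (hgub : ∀ x, g x ≤ 1 - c)
    (hgver : (fun ω => g (X ω)) =ᵐ[μ] μ[A | MeasurableSpace.comap X inferInstance]) :
    ∫ ω, (A ω / g (X ω) - (1 - A ω) / (1 - g (X ω))) * Y ω ∂μ
      = ∫ ω, Y₁ ω - Y₀ ω ∂μ := by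
  obtain ⟨M₁, hM₁⟩ := hY₁b
  obtain ⟨M₀, hM₀⟩ := hY₀b
  have hY₁i : Integrable Y₁ μ := .of_bound hY₁.aestronglyMeasurable M₁ (ae_of_all _ hM₁)
  have hY₀i : Integrable Y₀ μ := .of_bound hY₀.aestronglyMeasurable M₀ (ae_of_all _ hM₀)
  have hAi : Integrable A μ := .of_bound hA.aestronglyMeasurable 1 (ae_of_all _ fun ω ↦ by
    rcases hAval ω with h | h <;> simp [h])
  have hAval₀ : ∀ ω, 1 - A ω = 0 ∨ 1 - A ω = 1 := fun ω ↦ by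
    rcases hAval ω with h | h <;> simp [h]
  have hgX : Measurable[MeasurableSpace.comap X inferInstance] (fun ω ↦ g (X ω)) :=
    hg.comp (comap_measurable X)
  have hgX₀ : ∀ ω, c ≤ 1 - g (X ω) := fun ω ↦ by linarith [hgub (X ω)]
  have hpair := comap_measurable (m := inferInstance) fun ω ↦ (Y₁ ω, Y₀ ω)
  have h_arm₁ : ∫ ω, A ω / g (X ω) * Y₁ ω ∂μ = ∫ ω, Y₁ ω ∂μ :=
    hCI.integral_div_mul_eq hX.comap_le (hY₁.prodMk hY₀).comap_le hA.comap_le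
      (comap_measurable A) hAval hgX.stronglyMeasurable hgver hc (fun ω ↦ hglb (X ω))
      (measurable_fst.comp hpair).stronglyMeasurable hY₁i
  have h_arm₀ : ∫ ω, (1 - A ω) / (1 - g (X ω)) * Y₀ ω ∂μ = ∫ ω, Y₀ ω ∂μ :=
    hCI.integral_div_mul_eq hX.comap_le (hY₁.prodMk hY₀).comap_le hA.comap_le
      ((comap_measurable A).const_sub 1) hAval₀ (hgX.const_sub 1).stronglyMeasurable
      ((hgver.fun_comp (1 - ·)).trans (condExp_const_sub hX.comap_le 1 hAi).symm) hc hgX₀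
      (measurable_snd.comp hpair).stronglyMeasurable hY₀i
  calc ∫ ω, (A ω / g (X ω) - (1 - A ω) / (1 - g (X ω))) * Y ω ∂μ
      = ∫ ω, A ω / g (X ω) * Y₁ ω - (1 - A ω) / (1 - g (X ω)) * Y₀ ω ∂μ := by
        refine integral_congr_ae (ae_of_all _ fun ω ↦ ?_)
        dsimp only
        rw [hYdef ω]
        rcases hAval ω with h | h <;> rw [h] <;> ring
    _ = ∫ ω, Y₁ ω ∂μ - ∫ ω, Y₀ ω ∂μ := by
        rw [integral_sub, h_arm₁, h_arm₀]
        · exact hY₁i.div_mul_of_eq_zero_or_eq_one hA.aestronglyMeasurable hAval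
            (hg.comp hX).aestronglyMeasurable hc fun ω ↦ hglb (X ω)
        · exact hY₀i.div_mul_of_eq_zero_or_eq_one (measurable_const.sub hA).aestronglyMeasurable
            hAval₀ (measurable_const.sub (hg.comp hX)).aestronglyMeasurable hc hgX₀
    _ = ∫ ω, Y₁ ω - Y₀ ω ∂μ := (integral_sub hY₁i hY₀i).symm

/-- Inverse-probability-weighting identification of the average treatment effect contrast:
E[(A/g(X) − (1 − A)/(1 − g(X)))·Y] = E[Y₁ − Y₀]. -/
theorem ipw_ate_identification
    {Ω : Type*} [MeasurableSpace Ω] [StandardBorelSpace Ω]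
    (μ : Measure Ω) [IsProbabilityMeasure μ]
    {d : ℕ} (A Y Y₁ Y₀ : Ω → ℝ) (X : Ω → (Fin d → ℝ)) (g : (Fin d → ℝ) → ℝ) (c : ℝ)
    (hA : Measurable A) (hAval : ∀ ω, A ω = 0 ∨ A ω = 1)
    (hY₁ : Measurable Y₁) (hY₀ : Measurable Y₀)
    (hY₁b : ∃ M, ∀ ω, |Y₁ ω| ≤ M) (hY₀b : ∃ M, ∀ ω, |Y₀ ω| ≤ M)
    (hYdef : ∀ ω, Y ω = A ω * Y₁ ω + (1 - A ω) * Y₀ ω)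
    (hX : Measurable X) (hg : Measurable g)
    (hCI : CondIndep (MeasurableSpace.comap X inferInstance)
      (MeasurableSpace.comap (fun ω => (Y₁ ω, Y₀ ω)) inferInstance)
      (MeasurableSpace.comap A inferInstance)
      hX.comap_le μ)
    (hc : 0 < c) (hc2 : c < 1/2) (hglb : ∀ x, c ≤ g x) (hgub : ∀ x, g x ≤ 1 - c)
    (hgver : (fun ω => g (X ω)) =ᵐ[μ] μ[A | MeasurableSpace.comap X inferInstance]) :
    ∫ ω, (A ω / g (X ω) - (1 - A ω) / (1 - g (X ω))) * Y ω ∂μ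
      = ∫ ω, Y₁ ω - Y₀ ω ∂μ :=
  ipw_ate_identification_general μ A Y Y₁ Y₀ X g c hA hAval hY₁ hY₀ hY₁b hY₀b hYdef hX hg hCI hc
    hglb hgub hgver
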